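/- Let μ be a Borel probability measure on ℝ with ∫ y dμ = 0 and finite fourth moment; write E_p = ∫ y^p dμ for p = 2, 4. Let γ ∈ (0,1), δ = 1 − γ. Then for all natural numbers 0 < l₁ < l₂ < l₃, the stationary fourth cross-moment ∫∫∫∫ y₀·y₁·y₂·y₃ K_{l₃−l₂}(y₂, dy₃) K_{l₂−l₁}(y₁, dy₂) K_{l₁}(y₀, dy₁) dμ(y₀) equals δ^{l₃} E₄ + δ^{l₃−l₂+l₁}(1 − δ^{l₂−l₁}) E₂². That is, E(m̄_i m̄_{i+l₁} m̄_{i+l₂} m̄_{i+l₃}) = δ^{l₃} E(m̄⁴) + δ^{l₃−l₂+l₁}(1−δ^{l₂−l₁}) E(m̄²)². -/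

import Mathlib

open MeasureTheory

/-- The `h`-step renewal kernel of one MSMD multiplier with renewal distribution `μ` and
switching probability `γ`: `K_h(x, ·) = (1 - (1-γ)^h)·μ + (1-γ)^h·δ_x`. -/
noncomputable def renewalKernel (μ : Measure ℝ) (γ : ℝ) (h : ℕ) (x : ℝ) : Measure ℝ :=
  ENNReal.ofReal (1 - (1 - γ) ^ h) • μ + ENNReal.ofReal ((1 - γ) ^ h) • Measure.dirac x

/-!
Under `K_h` the chain stays put with probability `δ^h` and otherwise restarts from `μ`, so
`∫ y^p K_h(x, dy) = (1 - δ^h) E_p + δ^h x^p`. Integrating out `y₃, y₂, y₁, y₀` in turn, a restart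
in `(l₂, l₃]` or in `(0, l₁]` leaves a factor `∫ y dμ = 0`, so only two terms survive: no restart
(`δ^{l₃} E₄`) and a restart in `(l₁, l₂]` (`δ^{l₃-l₂+l₁} (1 - δ^{l₂-l₁}) E₂²`).
-/

lemma integrable_pow_of_le_of_even {μ : Measure ℝ} [IsFiniteMeasure μ] {p q : ℕ} (hpq : p ≤ q)
    (hq : Even q) (h : Integrable (fun y : ℝ => y ^ q) μ) :
    Integrable (fun y : ℝ => y ^ p) μ := by
  have hnorm : Integrable (fun y : ℝ => ‖y‖ ^ q) μ := by
    simpa only [Real.norm_eq_abs, hq.pow_abs] using h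
  refine (integrable_norm_iff (by fun_prop)).1 ?_
  simpa only [norm_pow] using
    integrable_norm_pow_of_le (f := fun y : ℝ => y) (by fun_prop) hpq hnorm

section renewalKernel

variable {μ : Measure ℝ} {γ : ℝ}

lemma integrable_renewalKernel {f : ℝ → ℝ} (hf : Integrable f μ) (h : ℕ) (x : ℝ) :
    Integrable f (renewalKernel μ γ h x) :=
  (hf.smul_measure ENNReal.ofReal_ne_top).add_measure
    ((integrable_dirac enorm_lt_top).smul_measure ENNReal.ofReal_ne_top)

lemma integral_renewalKernel (hγ : γ ∈ Set.Icc 0 1) {f : ℝ → ℝ} (hf : Integrable f μ)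
    (h : ℕ) (x : ℝ) :
    ∫ y, f y ∂(renewalKernel μ γ h x)
      = (1 - (1 - γ) ^ h) * ∫ y, f y ∂μ + (1 - γ) ^ h * f x := by
  have hδ0 : 0 ≤ (1 - γ) ^ h := pow_nonneg (by linarith [hγ.2]) h
  have hδ1 : (1 - γ) ^ h ≤ 1 := pow_le_one₀ (by linarith [hγ.2]) (by linarith [hγ.1])
  rw [renewalKernel, integral_add_measure (hf.smul_measure ENNReal.ofReal_ne_top)
      ((integrable_dirac enorm_lt_top).smul_measure ENNReal.ofReal_ne_top),
    integral_smul_measure, integral_smul_measure, integral_dirac,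
    ENNReal.toReal_ofReal (by linarith), ENNReal.toReal_ofReal hδ0, smul_eq_mul, smul_eq_mul]

lemma integral_const_mul_pow_renewalKernel (hγ : γ ∈ Set.Icc 0 1) {p : ℕ}
    (hp : Integrable (fun y : ℝ => y ^ p) μ) (h : ℕ) (c x : ℝ) :
    ∫ y, c * y ^ p ∂(renewalKernel μ γ h x)
      = c * ((1 - (1 - γ) ^ h) * ∫ y, y ^ p ∂μ + (1 - γ) ^ h * x ^ p) := by
  rw [integral_const_mul, integral_renewalKernel hγ hp]

lemma integral_const_mul_renewalKernel_of_integral_eq_zero (hγ : γ ∈ Set.Icc 0 1)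
    (hmean : ∫ y, y ∂μ = 0) (hint : Integrable (fun y : ℝ => y) μ) (h : ℕ) (c x : ℝ) :
    ∫ y, c * y ∂(renewalKernel μ γ h x) = c * ((1 - γ) ^ h * x) := by
  rw [integral_const_mul, integral_renewalKernel hγ hint, hmean, mul_zero, zero_add]

end renewalKernel

section CrossMoment

variable {μ : Measure ℝ} [IsFiniteMeasure μ] {γ : ℝ}

lemma integral_integral_cross_moment_renewalKernel (hγ : γ ∈ Set.Icc 0 1)
    (hmean : ∫ y, y ∂μ = 0) (hsq : Integrable (fun y : ℝ => y ^ 2) μ) (h₂ h₃ : ℕ) (y₀ y₁ : ℝ) :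
    ∫ y₂, (∫ y₃, y₀ * y₁ * y₂ * y₃ ∂(renewalKernel μ γ h₃ y₂)) ∂(renewalKernel μ γ h₂ y₁)
      = (1 - γ) ^ h₃ * y₀ * ((1 - (1 - γ) ^ h₂) * (∫ y, y ^ 2 ∂μ) * y₁
        + (1 - γ) ^ h₂ * y₁ ^ 3) := by
  have hint₁ : Integrable (fun y : ℝ => y) μ := by
    simpa using integrable_pow_of_le_of_even (p := 1) (by norm_num) (by decide) hsq
  simp only [integral_const_mul_renewalKernel_of_integral_eq_zero hγ hmean hint₁]
  have hcongr (y₂ : ℝ) :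
      y₀ * y₁ * y₂ * ((1 - γ) ^ h₃ * y₂) = ((1 - γ) ^ h₃ * y₀ * y₁) * y₂ ^ 2 := by
    ring
  simp only [hcongr, integral_const_mul_pow_renewalKernel hγ hsq]
  ring

lemma integral_integral_integral_cross_moment_renewalKernel (hγ : γ ∈ Set.Icc 0 1)
    (hmean : ∫ y, y ∂μ = 0) (hmom : Integrable (fun y : ℝ => y ^ 4) μ) (h₁ h₂ h₃ : ℕ) (y₀ : ℝ) :
    ∫ y₁, (∫ y₂, (∫ y₃, y₀ * y₁ * y₂ * y₃ ∂(renewalKernel μ γ h₃ y₂))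
        ∂(renewalKernel μ γ h₂ y₁)) ∂(renewalKernel μ γ h₁ y₀)
      = ((1 - γ) ^ h₃ * (1 - (1 - γ) ^ h₂) * (∫ y, y ^ 2 ∂μ) * (1 - γ) ^ h₁) * y₀ ^ 2
        + ((1 - γ) ^ h₃ * (1 - γ) ^ h₂ * (1 - γ) ^ h₁) * y₀ ^ 4
        + ((1 - γ) ^ h₃ * (1 - γ) ^ h₂ * (1 - (1 - γ) ^ h₁) * ∫ y, y ^ 3 ∂μ) * y₀ := by
  have hint (p : ℕ) (hp : p ≤ 4) : Integrable (fun y : ℝ => y ^ p) μ :=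
    integrable_pow_of_le_of_even hp (by decide) hmom
  have hint₁ : Integrable (fun y : ℝ => y) μ := by simpa using hint 1 (by norm_num)
  simp only [integral_integral_cross_moment_renewalKernel hγ hmean (hint 2 (by norm_num)),
    mul_add, ← mul_assoc]
  rw [integral_add ((integrable_renewalKernel hint₁ _ _).const_mul _)
      ((integrable_renewalKernel (hint 3 (by norm_num)) _ _).const_mul _),
    integral_const_mul_renewalKernel_of_integral_eq_zero hγ hmean hint₁,
    integral_const_mul_pow_renewalKernel hγ (hint 3 (by norm_num))]
  ring

end CrossMoment

theorem centered_chain_fourth_cross_moment_stationary_general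
    (μ : Measure ℝ) [IsProbabilityMeasure μ]
    (hmean : ∫ y, y ∂μ = 0) (hmom : Integrable (fun y : ℝ => y ^ 4) μ)
    (E₂ E₄ : ℝ) (hE₂ : E₂ = ∫ y, y ^ 2 ∂μ) (hE₄ : E₄ = ∫ y, y ^ 4 ∂μ)
    (γ : ℝ) (hγ : γ ∈ Set.Ioo (0 : ℝ) 1) (δ : ℝ) (hδ : δ = 1 - γ)
    (l₁ l₂ l₃ : ℕ) (hl₁₂ : l₁ < l₂) (hl₂₃ : l₂ < l₃) :
    ∫ y₀, (∫ y₁, (∫ y₂, (∫ y₃, y₀ * y₁ * y₂ * y₃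
        ∂(renewalKernel μ γ (l₃ - l₂) y₂))
      ∂(renewalKernel μ γ (l₂ - l₁) y₁))
      ∂(renewalKernel μ γ l₁ y₀))
      ∂μ =
      δ ^ l₃ * E₄ + δ ^ (l₃ - l₂ + l₁) * (1 - δ ^ (l₂ - l₁)) * E₂ ^ 2 := by
  have hint₁ : Integrable (fun y : ℝ => y) μ := by
    simpa using integrable_pow_of_le_of_even (p := 1) (by norm_num) (by decide) hmom
  have hint₂ : Integrable (fun y : ℝ => y ^ 2) μ :=
    integrable_pow_of_le_of_even (by norm_num) (by decide) hmom
  simp only [integral_integral_integral_cross_moment_renewalKernel (Set.Ioo_subset_Icc_self hγ)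
    hmean hmom]
  rw [integral_add (by exact (hint₂.const_mul _).add (hmom.const_mul _)) (hint₁.const_mul _),
    integral_add (hint₂.const_mul _) (hmom.const_mul _), integral_const_mul, integral_const_mul,
    integral_const_mul, hmean, ← hE₂, ← hE₄, hδ]
  have hpow₃ : (1 - γ) ^ (l₃ - l₂) * (1 - γ) ^ (l₂ - l₁) * (1 - γ) ^ l₁ = (1 - γ) ^ l₃ := by
    rw [← pow_add, ← pow_add]; congr 1; omega
  have hpow₂ : (1 - γ) ^ (l₃ - l₂) * (1 - γ) ^ l₁ = (1 - γ) ^ (l₃ - l₂ + l₁) := (pow_add ..).symm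
  linear_combination E₄ * hpow₃ + (1 - (1 - γ) ^ (l₂ - l₁)) * E₂ ^ 2 * hpow₂

/-- the stationary fourth cross-moment of the centered multiplier chain:
for `0 < l₁ < l₂ < l₃`,
`E(m̄_i m̄_{i+l₁} m̄_{i+l₂} m̄_{i+l₃}) = δ^{l₃} E₄ + δ^{l₃−l₂+l₁}(1−δ^{l₂−l₁}) E₂²`,
where `E_p = ∫ y^p dμ` and `δ = 1 − γ`. -/
theorem centered_chain_fourth_cross_moment_stationary
    (μ : Measure ℝ) [IsProbabilityMeasure μ]
    (hmean : ∫ y, y ∂μ = 0) (hmom : Integrable (fun y : ℝ => y ^ 4) μ)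
    (E₂ E₄ : ℝ) (hE₂ : E₂ = ∫ y, y ^ 2 ∂μ) (hE₄ : E₄ = ∫ y, y ^ 4 ∂μ)
    (γ : ℝ) (hγ : γ ∈ Set.Ioo (0 : ℝ) 1) (δ : ℝ) (hδ : δ = 1 - γ)
    (l₁ l₂ l₃ : ℕ) (hl₁ : 0 < l₁) (hl₁₂ : l₁ < l₂) (hl₂₃ : l₂ < l₃) :
    ∫ y₀, (∫ y₁, (∫ y₂, (∫ y₃, y₀ * y₁ * y₂ * y₃
        ∂(renewalKernel μ γ (l₃ - l₂) y₂))
      ∂(renewalKernel μ γ (l₂ - l₁) y₁))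
      ∂(renewalKernel μ γ l₁ y₀))
      ∂μ =
      δ ^ l₃ * E₄ + δ ^ (l₃ - l₂ + l₁) * (1 - δ ^ (l₂ - l₁)) * E₂ ^ 2 :=
  centered_chain_fourth_cross_moment_stationary_general μ hmean hmom E₂ E₄ hE₂ hE₄ γ hγ δ hδ l₁ l₂
    l₃ hl₁₂ hl₂₃
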